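/- Algebraic core of the relation log Z ∝ c_r/a^{1/3} for massive IIA quivers: Let I range over a finite index set, let Δ_I, 𝔫_I and G₀ be real numbers satisfying the two constraints π·G₀ + Σ_I(Δ_I − π) = 0 and G₀ + Σ_I(𝔫_I − 1) = 0. Then Σ_I [ (3/π)·F(Δ_I) + (𝔫_I − Δ_I/π)·F′(Δ_I) ] = (π²/2)·[ G₀ + Σ_I (𝔫_I − 1)·(Δ_I/π − 1)² ]. -/

import Mathlib

/-!
Each summand differs from `π²/2 · (m − 1)(Δ/π − 1)²` by the affine expression
`−π/3 · (Δ − π) − π²/6 · (m − 1)`; summed over `I`, the two constraints turn it into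
`π²/3 · G₀ + π²/6 · G₀ = π²/2 · G₀`.
-/

open Real

/-- The paper's function `F = g₊` on the branch `0 < u < 2π`. -/
noncomputable def F (u : ℝ) : ℝ := u ^ 3 / 6 - π * u ^ 2 / 2 + π ^ 2 * u / 3

noncomputable def Fprime (u : ℝ) : ℝ := u ^ 2 / 2 - π * u + π ^ 2 / 3

lemma three_div_pi_mul_F_add_mul_Fprime (Δ m : ℝ) :
    3 / π * F Δ + (m - Δ / π) * Fprime Δ
      = π ^ 2 / 2 * ((m - 1) * (Δ / π - 1) ^ 2) - π / 3 * (Δ - π) - π ^ 2 / 6 * (m - 1) := by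
  have hπ : π ≠ 0 := pi_ne_zero
  unfold F Fprime
  field_simp
  ring

/-- Algebraic core of the relation `log Z ∝ c_r/a^{1/3}` for massive IIA
quivers: under `π·G₀ + Σ_I(Δ_I − π) = 0` and `G₀ + Σ_I(𝔫_I − 1) = 0`,
`Σ_I [(3/π)F(Δ_I) + (𝔫_I − Δ_I/π)F′(Δ_I)] = (π²/2)[G₀ + Σ_I(𝔫_I − 1)(Δ_I/π − 1)²]`. -/
theorem stmt17 {ι : Type*} [Fintype ι] (G₀ : ℝ) (Δ m : ι → ℝ)
    (h1 : π * G₀ + ∑ i, (Δ i - π) = 0)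
    (h2 : G₀ + ∑ i, (m i - 1) = 0) :
    ∑ i, (3 / π * F (Δ i) + (m i - Δ i / π) * Fprime (Δ i))
      = π ^ 2 / 2 * (G₀ + ∑ i, (m i - 1) * (Δ i / π - 1) ^ 2) := by
  calc ∑ i, (3 / π * F (Δ i) + (m i - Δ i / π) * Fprime (Δ i))
      = ∑ i, (π ^ 2 / 2 * ((m i - 1) * (Δ i / π - 1) ^ 2)
          - π / 3 * (Δ i - π) - π ^ 2 / 6 * (m i - 1)) := by
        simp only [three_div_pi_mul_F_add_mul_Fprime]
    _ = π ^ 2 / 2 * ∑ i, (m i - 1) * (Δ i / π - 1) ^ 2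
          - π / 3 * ∑ i, (Δ i - π) - π ^ 2 / 6 * ∑ i, (m i - 1) := by
        rw [Finset.sum_sub_distrib, Finset.sum_sub_distrib, Finset.mul_sum, Finset.mul_sum, Finset.mul_sum]
    _ = π ^ 2 / 2 * (G₀ + ∑ i, (m i - 1) * (Δ i / π - 1) ^ 2) := by
        linear_combination (-π / 3) * h1 + (-π ^ 2 / 6) * h2
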